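/- arXiv:2208.07065 — 4 statements merged into one kernel-verified Lean document; each statement's English description precedes it below -/
import Mathlib

section
/- In the formal power series ring over the integers, ∑_{n≥0} d_{25k+1}(n) q^n ≡ (∑_{n≥0} d_1(n) q^n) · ∏_{m≥1}(1-q^{10m})^{5k}/(1-q^{5m})^{15k} (mod 5), for every nonnegative integer k. -/
/-!
With `A = ∏ (1 - q^m)` and `B = ∏ (1 - q^{2m})`, the generating function of `d_K` is
`B^K / A^{3K+1}`, so that of `d_{25k+1}` is that of `d_1` times `(B^{25} / A^{75})^k`.
Modulo 5 the Frobenius turns `A^5` and `B^5` into `∏ (1 - q^{5m})` and `∏ (1 - q^{10m})`.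
Every identity is only needed modulo `q^{n+1}`, where the products may be truncated at `m = n+1`.
-/

open Finset PowerSeries

/-- `IsElongated k d` says that `d` is the `k`-elongated plane partition function, i.e.
`∑_{n≥0} d(n) q^n = ∏_{m≥1} (1-q^{2m})^k / (1-q^m)^{3k+1}` in `ℤ[[q]]`, expressed in cleared,
truncated form (truncating the products at `m = n+1` does not affect the `n`-th coefficient,
and this condition determines `d` uniquely). -/
def IsElongated (k : ℕ) (d : ℕ → ℤ) : Prop :=
  ∀ n : ℕ,
    (PowerSeries.coeff (R := ℤ) n)
        (PowerSeries.mk d *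
          ∏ m ∈ Finset.range (n + 1), (1 - (PowerSeries.X : PowerSeries ℤ) ^ (m + 1)) ^ (3 * k + 1)) =
    (PowerSeries.coeff (R := ℤ) n)
        (∏ m ∈ Finset.range (n + 1), (1 - (PowerSeries.X : PowerSeries ℤ) ^ (2 * (m + 1))) ^ k)

namespace PowerSeries

variable {R : Type*} [CommRing R]

instance charP (p : ℕ) [CharP R p] : CharP R⟦X⟧ p :=
  charP_of_injective_ringHom C_injective p

theorem coeff_eq_of_X_pow_dvd_sub {j : ℕ} {f g : R⟦X⟧} (h : X ^ (j + 1) ∣ f - g) :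
    coeff j f = coeff j g :=
  sub_eq_zero.mp <| by simpa using X_pow_dvd_iff.mp h j (Nat.lt_succ_self j)

end PowerSeries

noncomputable def truncEulerProd (R : Type*) [CommRing R] (N c : ℕ) : R⟦X⟧ :=
  ∏ m ∈ range N, (1 - X ^ (c * (m + 1)))

namespace truncEulerProd

variable {R : Type*} [CommRing R]

theorem pow_eq_prod (N c e : ℕ) :
    truncEulerProd R N c ^ e = ∏ m ∈ range N, (1 - X ^ (c * (m + 1))) ^ e :=
  (prod_pow _ _ _).symm

theorem map {S : Type*} [CommRing S] (f : R →+* S) (N c : ℕ) :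
    PowerSeries.map f (truncEulerProd R N c) = truncEulerProd S N c := by
  simp [truncEulerProd]

theorem isUnit (N : ℕ) {c : ℕ} (hc : 0 < c) : IsUnit (truncEulerProd R N c) := by
  simp [truncEulerProd, isUnit_iff_constantCoeff, hc.ne']

theorem pow_char (p : ℕ) [Fact p.Prime] [CharP R p] (N c : ℕ) :
    truncEulerProd R N c ^ p = truncEulerProd R N (p * c) := by
  simp only [truncEulerProd, ← prod_pow, sub_pow_char, one_pow, ← pow_mul, mul_assoc, mul_comm p]

theorem X_pow_dvd_sub {j n c : ℕ} (hjn : j ≤ n) (hc : 0 < c) :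
    (X : R⟦X⟧) ^ (j + 1) ∣ truncEulerProd R (n + 1) c - truncEulerProd R (j + 1) c := by
  have htail : (X : R⟦X⟧) ^ (j + 1) ∣ (∏ m ∈ Ico (j + 1) (n + 1), (1 - X ^ (c * (m + 1)))) - 1 := by
    refine prod_induction _ (fun P => (X : R⟦X⟧) ^ (j + 1) ∣ P - 1) (fun P Q hP hQ => ?_)
      (by simp) (fun m hm => ?_)
    · simpa [mul_sub] using dvd_add (hQ.mul_left P) hP
    · simpa using (pow_dvd_pow (X : R⟦X⟧)
        (by nlinarith [(mem_Ico.mp hm).1] : j + 1 ≤ c * (m + 1))).neg_right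
  rw [truncEulerProd, truncEulerProd, ← prod_range_mul_prod_Ico _ (by omega : j + 1 ≤ n + 1)]
  simpa [mul_sub] using htail.mul_left (∏ m ∈ range (j + 1), (1 - (X : R⟦X⟧) ^ (c * (m + 1))))

theorem coeff_mul_pow_of_le {j n c : ℕ} (hjn : j ≤ n) (hc : 0 < c) (f : R⟦X⟧) (e : ℕ) :
    coeff j (f * truncEulerProd R (n + 1) c ^ e) = coeff j (f * truncEulerProd R (j + 1) c ^ e) :=
  coeff_eq_of_X_pow_dvd_sub <| by
    simpa [mul_sub] using ((X_pow_dvd_sub hjn hc).trans (sub_dvd_pow_sub_pow _ _ e)).mul_left f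

end truncEulerProd

namespace IsElongated

theorem X_pow_dvd {K : ℕ} {d : ℕ → ℤ} (hd : IsElongated K d) (n : ℕ) :
    (X : ℤ⟦X⟧) ^ (n + 1) ∣
      mk d * truncEulerProd ℤ (n + 1) 1 ^ (3 * K + 1) - truncEulerProd ℤ (n + 1) 2 ^ K := by
  refine X_pow_dvd_iff.mpr fun j hj => sub_eq_zero.mpr ?_
  have hjn : j ≤ n := by omega
  calc coeff j (mk d * truncEulerProd ℤ (n + 1) 1 ^ (3 * K + 1))
      = coeff j (mk d * truncEulerProd ℤ (j + 1) 1 ^ (3 * K + 1)) :=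
        truncEulerProd.coeff_mul_pow_of_le hjn one_pos _ _
    _ = coeff j (truncEulerProd ℤ (j + 1) 2 ^ K) := by
        simpa [truncEulerProd.pow_eq_prod] using hd j
    _ = coeff j (truncEulerProd ℤ (n + 1) 2 ^ K) := by
        simpa using (truncEulerProd.coeff_mul_pow_of_le hjn two_pos (1 : ℤ⟦X⟧) K).symm

theorem X_pow_dvd_sub_of_add {K L : ℕ} {d e : ℕ → ℤ} (hd : IsElongated (K + L) d)
    (he : IsElongated L e) (n : ℕ) :
    (X : ℤ⟦X⟧) ^ (n + 1) ∣
      mk d * truncEulerProd ℤ (n + 1) 1 ^ (3 * K) - mk e * truncEulerProd ℤ (n + 1) 2 ^ K := by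
  set A := truncEulerProd ℤ (n + 1) 1
  set B := truncEulerProd ℤ (n + 1) 2
  have hcomb : (mk d * A ^ (3 * K) - mk e * B ^ K) * A ^ (3 * L + 1) =
      (mk d * A ^ (3 * (K + L) + 1) - B ^ (K + L)) - B ^ K * (mk e * A ^ (3 * L + 1) - B ^ L) := by
    ring
  rw [← ((truncEulerProd.isUnit _ one_pos).pow _).dvd_mul_right, hcomb]
  exact dvd_sub (hd.X_pow_dvd n) ((he.X_pow_dvd n).mul_left _)

end IsElongated

/-- `∑ d_{25k+1}(n) q^n ≡ (∑ d_1(n) q^n) · ∏_{m≥1} (1-q^{10m})^{5k}/(1-q^{5m})^{15k} (mod 5)`,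
in cleared, truncated form: for each `n`, the `n`-th coefficients of
`(∑ d_{25k+1}(n) q^n) · ∏ (1-q^{5m})^{15k}` and `(∑ d_1(n) q^n) · ∏ (1-q^{10m})^{5k}`
agree modulo 5. -/
theorem d25kp1_genfun_cong (k : ℕ) (d e : ℕ → ℤ)
    (hd : IsElongated (25 * k + 1) d) (he : IsElongated 1 e) (n : ℕ) :
    (5 : ℤ) ∣
      (PowerSeries.coeff (R := ℤ) n)
          (PowerSeries.mk d *
            ∏ m ∈ Finset.range (n + 1),
              (1 - (PowerSeries.X : PowerSeries ℤ) ^ (5 * (m + 1))) ^ (15 * k)) -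
      (PowerSeries.coeff (R := ℤ) n)
          (PowerSeries.mk e *
            ∏ m ∈ Finset.range (n + 1),
              (1 - (PowerSeries.X : PowerSeries ℤ) ^ (10 * (m + 1))) ^ (5 * k)) := by
  have : Fact (Nat.Prime 5) := ⟨Nat.prime_five⟩
  have key := map_dvd (PowerSeries.map (Int.castRingHom (ZMod 5))) (hd.X_pow_dvd_sub_of_add he n)
  simp only [map_pow, map_sub, map_mul, map_X, truncEulerProd.map] at key
  rw [← truncEulerProd.pow_eq_prod, ← truncEulerProd.pow_eq_prod]
  refine (ZMod.intCast_eq_intCast_iff_dvd_sub _ _ 5).mp ?_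
  simp only [← eq_intCast (Int.castRingHom (ZMod 5)), ← coeff_map, map_mul, map_pow,
    truncEulerProd.map]
  have h5 : truncEulerProd (ZMod 5) (n + 1) 5 = truncEulerProd (ZMod 5) (n + 1) 1 ^ 5 :=
    (truncEulerProd.pow_char 5 _ 1).symm
  have h10 : truncEulerProd (ZMod 5) (n + 1) 10 = truncEulerProd (ZMod 5) (n + 1) 2 ^ 5 :=
    (truncEulerProd.pow_char 5 _ 2).symm
  rw [h5, h10, ← pow_mul, ← pow_mul, show 5 * (15 * k) = 3 * (25 * k) by ring,
    show 5 * (5 * k) = 25 * k by ring]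
  exact (coeff_eq_of_X_pow_dvd_sub key).symm
end

section
/- Jacobi's identity: ∏_{m≥1} (1-q^m)^3 = ∑_{n≥0} (-1)^n (2n+1) q^{n(n+1)/2} as formal power series. -/
/-!
Under `x ↦ q^n x` the polynomial `∏_{j<n} (1 + q^{j+1} x) (x + q^j)` (which is `x^n` times the
finite Jacobi triple product) becomes `q^{n(n-1)/2} ∏_{i=1}^{2n} (1 + q^i x)`, so the `q`-binomial
theorem gives its coefficients `q^{k(k+1)/2} [2n, n+k]_q`. It vanishes at `x = -1`, and its
derivative there is `±(q;q)_n (q;q)_{n-1}`. Modulo `q^n` we have `(q;q)_n [2n, m]_q ≡ 1` and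
`(q;q)_n^3 ≡ (q;q)_n^2 (q;q)_{n-1}`, and pairing the terms `m = n + k` and `m = n - 1 - k` of the
differentiated expansion leaves `∑_{k<n} (-1)^k (2k+1) q^{k(k+1)/2}`.
-/

open Finset PowerSeries

namespace Jacobi

variable {R : Type*} [CommRing R] (q : R)

/-- The truncated `n - k` is harmless: for `k > n` it multiplies `gaussBinom q n k = 0`. -/
def gaussBinom : ℕ → ℕ → R
  | _, 0 => 1
  | 0, _ + 1 => 0
  | n + 1, k + 1 => gaussBinom n (k + 1) + q ^ (n - k) * gaussBinom n k

@[simp]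
lemma gaussBinom_zero_right (n : ℕ) : gaussBinom q n 0 = 1 := by
  cases n <;> rfl

lemma gaussBinom_succ_succ (n k : ℕ) :
    gaussBinom q (n + 1) (k + 1) = gaussBinom q n (k + 1) + q ^ (n - k) * gaussBinom q n k :=
  rfl

@[simp]
lemma gaussBinom_zero_succ (k : ℕ) : gaussBinom q 0 (k + 1) = 0 :=
  rfl

lemma gaussBinom_eq_zero_of_lt {n k : ℕ} (h : n < k) : gaussBinom q n k = 0 := by
  induction n generalizing k with
  | zero => obtain ⟨k, rfl⟩ := Nat.exists_eq_add_of_lt h; rfl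
  | succ n ih =>
    obtain ⟨k, rfl⟩ : ∃ j, k = j + 1 := ⟨k - 1, by omega⟩
    rw [gaussBinom_succ_succ, ih (by omega), ih (by omega), mul_zero, add_zero]

@[simp]
lemma gaussBinom_self (n : ℕ) : gaussBinom q n n = 1 := by
  induction n with
  | zero => rfl
  | succ n ih => rw [gaussBinom_succ_succ, gaussBinom_eq_zero_of_lt q n.lt_succ_self, ih]; simp

/-- The `q`-Pochhammer symbol `(q^a; q)_r`. -/
def qPoch (a r : ℕ) : R := ∏ j ∈ range r, (1 - q ^ (a + j))

lemma qPoch_succ (a r : ℕ) : qPoch q a (r + 1) = qPoch q a r * (1 - q ^ (a + r)) :=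
  prod_range_succ _ _

lemma qPoch_succ' (a r : ℕ) : qPoch q a (r + 1) = (1 - q ^ a) * qPoch q (a + 1) r := by
  rw [qPoch, prod_range_succ', mul_comm, add_zero]
  simp only [qPoch, add_assoc, add_comm 1]

lemma qPoch_add (a r s : ℕ) : qPoch q a (r + s) = qPoch q a r * qPoch q (a + r) s := by
  simp only [qPoch, prod_range_add, add_assoc]

lemma pow_dvd_qPoch_sub_one (a r : ℕ) : q ^ a ∣ qPoch q a r - 1 := by
  induction r with
  | zero => simp [qPoch]
  | succ r ih =>
    have h : qPoch q a (r + 1) - 1 = (qPoch q a r - 1) * (1 - q ^ (a + r)) - q ^ a * q ^ r := by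
      rw [qPoch_succ, pow_add]; ring
    rw [h]
    exact (ih.mul_right _).sub (dvd_mul_right _ _)

lemma pow_dvd_qPoch_sub_qPoch (a b : ℕ) :
    q ^ (min a b + 1) ∣ qPoch q 1 a - qPoch q 1 b := by
  wlog hab : a ≤ b generalizing a b
  · rw [min_comm, ← dvd_neg, neg_sub]
    exact this b a (by omega)
  obtain ⟨r, rfl⟩ := Nat.exists_eq_add_of_le hab
  rw [min_eq_left hab, qPoch_add, ← dvd_neg, neg_sub, ← mul_sub_one, add_comm 1 a]
  exact (pow_dvd_qPoch_sub_one q (a + 1) r).mul_left _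

lemma gaussBinom_mul_qPoch (m r : ℕ) :
    gaussBinom q (m + r) m * qPoch q 1 r = qPoch q (m + 1) r := by
  induction r generalizing m with
  | zero => simp [qPoch]
  | succ r ihr =>
    induction m with
    | zero => simp [qPoch]
    | succ k ihm =>
      have hk : k + 1 + r = k + (r + 1) := by omega
      rw [show k + 1 + (r + 1) = (k + 1 + r) + 1 by omega, gaussBinom_succ_succ,
        show k + 1 + r - k = r + 1 by omega, qPoch_succ, qPoch_succ q (k + 1 + 1)]
      rw [← hk, qPoch_succ, qPoch_succ'] at ihm
      linear_combination (1 - q ^ (r + 1)) * ihr (k + 1) + q ^ (r + 1) * ihm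

lemma pow_dvd_gaussBinom_mul_qPoch_sub_one (m r s : ℕ) :
    q ^ (min m (min r s) + 1) ∣ gaussBinom q (m + r) m * qPoch q 1 s - 1 := by
  have hsplit : gaussBinom q (m + r) m * qPoch q 1 s - 1 =
      gaussBinom q (m + r) m * (qPoch q 1 s - qPoch q 1 r) + (qPoch q (m + 1) r - 1) := by
    rw [← gaussBinom_mul_qPoch q m r]; ring
  rw [hsplit]
  refine dvd_add (dvd_mul_of_dvd_right ?_ _) ?_
  · exact (pow_dvd_pow q (by omega)).trans (pow_dvd_qPoch_sub_qPoch q s r)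
  · exact (pow_dvd_pow q (by omega)).trans (pow_dvd_qPoch_sub_one q (m + 1) r)

def triangle (k : ℕ) : ℕ := k * (k + 1) / 2

lemma triangle_succ (k : ℕ) : triangle (k + 1) = triangle k + (k + 1) := by
  rw [triangle, triangle, show (k + 1) * (k + 1 + 1) = k * (k + 1) + (k + 1) * 2 by ring,
    Nat.add_mul_div_right _ _ two_pos]

lemma le_triangle (k : ℕ) : k ≤ triangle k := by
  induction k with
  | zero => rfl
  | succ k ih => rw [triangle_succ]; omega

/-- `k (k + 1) / 2` for the integer `k = m - n`. -/
def tripleExponent (n m : ℕ) : ℕ := if n ≤ m then triangle (m - n) else triangle (n - 1 - m)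

lemma sum_range_id_add_triangle (n m : ℕ) :
    ∑ j ∈ range n, j + triangle m = n * m + tripleExponent n m := by
  have two_mul_triangle (k : ℕ) : 2 * triangle k = k * (k + 1) :=
    Nat.mul_div_cancel' (Nat.even_mul_succ_self k).two_dvd
  have hsum : 2 * ∑ j ∈ range n, j + n = n * n := by
    rw [mul_comm, sum_range_id_mul_two]
    cases n <;> simp [add_one_mul, mul_add_one]
  apply Nat.eq_of_mul_eq_mul_left two_pos
  unfold tripleExponent
  split_ifs with h
  · obtain ⟨k, rfl⟩ := Nat.exists_eq_add_of_le h
    rw [Nat.add_sub_cancel_left]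
    linarith [two_mul_triangle (n + k), two_mul_triangle k]
  · obtain ⟨k, rfl⟩ := Nat.exists_eq_add_of_lt (not_le.mp h)
    rw [show m + k + 1 - 1 - m = k by omega]
    linarith [two_mul_triangle m, two_mul_triangle k]

lemma le_tripleExponent_add_min (n m : ℕ) (hm : m ≤ 2 * n) :
    n ≤ tripleExponent n m + (min m (min (2 * n - m) n) + 1) := by
  unfold tripleExponent
  split_ifs
  · have := le_triangle (m - n); omega
  · have := le_triangle (n - 1 - m); omega

lemma pow_dvd_pow_tripleExponent_mul_sub (n m : ℕ) (hm : m ≤ 2 * n) :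
    q ^ n ∣ q ^ tripleExponent n m * gaussBinom q (2 * n) m * qPoch q 1 n -
      q ^ tripleExponent n m := by
  have h := pow_dvd_gaussBinom_mul_qPoch_sub_one q m (2 * n - m) n
  rw [Nat.add_sub_cancel' hm] at h
  rw [mul_assoc, ← mul_sub_one]
  exact (pow_dvd_pow q (le_tripleExponent_add_min n m hm)).trans
    (pow_add q _ _ ▸ mul_dvd_mul_left _ h)

lemma sum_range_two_mul_add_one {M : Type*} [AddCommMonoid M] (f : ℕ → M) (n : ℕ) :
    ∑ m ∈ range (2 * n + 1), f m =
      ∑ k ∈ range n, (f (n - 1 - k) + f (n + k)) + f (2 * n) := by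
  rw [sum_range_succ, two_mul, sum_range_add, sum_add_distrib, sum_range_reflect f n]

lemma neg_one_pow_mul_sum_pow_tripleExponent (n : ℕ) :
    (-1) ^ n * ∑ m ∈ range (2 * n + 1), (-1) ^ m * m * q ^ tripleExponent n m =
      ∑ k ∈ range n, ((-1) ^ k * (2 * k + 1) : ℤ) • q ^ triangle k +
        (-1) ^ n * (2 * n) * q ^ triangle n := by
  have hpair : ∀ k ∈ range n,
      (-1) ^ n * ((-1) ^ (n - 1 - k) * ↑(n - 1 - k) * q ^ tripleExponent n (n - 1 - k) +
        (-1) ^ (n + k) * ↑(n + k) * q ^ tripleExponent n (n + k)) =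
      ((-1) ^ k * (2 * k + 1) : ℤ) • q ^ triangle k := by
    intro k hk
    obtain ⟨d, rfl⟩ := Nat.exists_eq_add_of_lt (mem_range.mp hk)
    have hsign (a b : ℕ) : (-1 : R) ^ (a + 2 * b) = (-1) ^ a := by
      rw [pow_add, pow_mul, neg_one_sq, one_pow, mul_one]
    have hs₁ : (-1 : R) ^ (k + d + 1) * (-1) ^ d = -(-1) ^ k := by
      rw [← pow_add, show k + d + 1 + d = k + 1 + 2 * d by ring, hsign, pow_succ, mul_neg_one]
    have hs₂ : (-1 : R) ^ (k + d + 1) * (-1) ^ (k + d + 1 + k) = (-1) ^ k := by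
      rw [← pow_add, show k + d + 1 + (k + d + 1 + k) = k + 2 * (k + d + 1) by ring, hsign]
    simp only [tripleExponent, show k + d + 1 - 1 - k = d by omega,
      show k + d + 1 - 1 - d = k by omega, Nat.add_sub_cancel_left,
      if_neg (show ¬ k + d + 1 ≤ d by omega), if_pos (Nat.le_add_right _ k)]
    rw [zsmul_eq_mul]
    push_cast
    linear_combination
      (d * q ^ triangle k : R) * hs₁ + ((k + d + 1 + k) * q ^ triangle k : R) * hs₂
  rw [sum_range_two_mul_add_one, mul_add, mul_sum, sum_congr rfl hpair]
  simp only [tripleExponent, if_pos (show n ≤ 2 * n by omega), show 2 * n - n = n by omega]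
  rw [pow_mul, neg_one_sq, one_pow]
  push_cast
  ring

end Jacobi

namespace Polynomial

open Jacobi

variable {R : Type*} [CommRing R] (q : R)

lemma coeff_prod_one_add_C_pow_mul_X (N m : ℕ) :
    (∏ i ∈ range N, (1 + C (q ^ (i + 1)) * X)).coeff m = q ^ triangle m * gaussBinom q N m := by
  induction N generalizing m with
  | zero => cases m <;> simp [coeff_one, triangle]
  | succ N ih =>
    rw [prod_range_succ, mul_add, mul_one, mul_left_comm, coeff_add]
    cases m with
    | zero => rw [coeff_C_mul, coeff_mul_X_zero, ih]; simp [triangle]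
    | succ k =>
      rw [coeff_C_mul, coeff_mul_X, ih, ih, gaussBinom_succ_succ, triangle_succ]
      rcases le_or_gt k N with hk | hk
      · obtain ⟨d, rfl⟩ := Nat.exists_eq_add_of_le hk
        rw [Nat.add_sub_cancel_left]
        ring
      · rw [gaussBinom_eq_zero_of_lt q hk]
        ring

noncomputable def tripleProd (n : ℕ) : R[X] :=
  ∏ j ∈ range n, (1 + C (q ^ (j + 1)) * X) * (X + C (q ^ j))

lemma tripleProd_comp (n : ℕ) :
    (tripleProd q n).comp (C (q ^ n) * X) =
      C (q ^ ∑ j ∈ range n, j) * ∏ i ∈ range (2 * n), (1 + C (q ^ (i + 1)) * X) := by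
  have hfactor : ∀ j ∈ range n,
      ((1 + C (q ^ (j + 1)) * X) * (X + C (q ^ j))).comp (C (q ^ n) * X) =
        C (q ^ j) * ((1 + C (q ^ (n + j + 1)) * X) * (1 + C (q ^ (n - 1 - j + 1)) * X)) := by
    intro j hj
    obtain ⟨d, rfl⟩ := Nat.exists_eq_add_of_lt (mem_range.mp hj)
    simp only [mul_comp, add_comp, one_comp, C_comp, X_comp]
    simp only [map_pow]
    rw [show j + d + 1 - 1 - j + 1 = d + 1 by omega]
    ring
  rw [tripleProd, Polynomial.prod_comp, prod_congr rfl hfactor, prod_mul_distrib, prod_mul_distrib,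
    prod_range_reflect (fun j => 1 + C (q ^ (j + 1)) * X), ← prod_pow_eq_pow_sum, map_prod,
    two_mul, prod_range_add]
  simp only [add_assoc, mul_comm]

lemma coeff_tripleProd (hq : IsLeftRegular q) (n m : ℕ) :
    (tripleProd q n).coeff m = q ^ tripleExponent n m * gaussBinom q (2 * n) m := by
  apply hq.pow (n * m)
  have h := congrArg (coeff · m) (tripleProd_comp q n)
  simp only [comp_C_mul_X_coeff, coeff_C_mul, coeff_prod_one_add_C_pow_mul_X] at h
  calc q ^ (n * m) * (tripleProd q n).coeff m
      = q ^ (∑ j ∈ range n, j + triangle m) * gaussBinom q (2 * n) m := by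
        rw [mul_comm, pow_mul, h, pow_add, mul_assoc]
    _ = q ^ (n * m) * (q ^ tripleExponent n m * gaussBinom q (2 * n) m) := by
        rw [sum_range_id_add_triangle, pow_add, mul_assoc]

lemma neg_eval_neg_one_derivative (p : R[X]) {L : ℕ} (hp : p.natDegree < L) :
    -(derivative p).eval (-1) = ∑ m ∈ range L, (-1) ^ m * m * p.coeff m := by
  rw [derivative_eval, sum_over_range' _ (fun _ => by simp) L hp, ← sum_neg_distrib]
  refine sum_congr rfl fun m _ => ?_
  cases m with
  | zero => simp
  | succ m => rw [Nat.add_sub_cancel, pow_succ]; ring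

lemma eval_neg_one_derivative_tripleProd (n : ℕ) :
    (derivative (tripleProd q (n + 1))).eval (-1) = (-1) ^ n * qPoch q 1 (n + 1) * qPoch q 1 n := by
  have hsplit : tripleProd q (n + 1) = (X + 1) * ((1 + C q * X) *
      ∏ j ∈ range n, (1 + C (q ^ (j + 2)) * X) * (X + C (q ^ (j + 1)))) := by
    rw [tripleProd, prod_range_succ']
    simp only [zero_add, pow_one, pow_zero, map_one]
    ring
  have hfactor : ∀ j ∈ range n,
      ((1 + C (q ^ (j + 2)) * X) * (X + C (q ^ (j + 1)))).eval (-1) =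
        (-1) * ((1 - q ^ (2 + j)) * (1 - q ^ (1 + j))) := by
    intro j _
    simp only [eval_mul, eval_add, eval_one, eval_C, eval_X]
    ring
  have hroot : (X + 1 : R[X]).eval (-1) = 0 := by simp
  have hder : derivative (X + 1 : R[X]) = 1 := by simp
  rw [hsplit, derivative_mul, hder, one_mul, eval_add, eval_mul (p := X + 1), hroot, zero_mul,
    add_zero, eval_mul, eval_prod, prod_congr rfl hfactor, prod_mul_distrib, prod_mul_distrib,
    prod_const, card_range, qPoch_succ']
  simp only [eval_add, eval_one, eval_mul, eval_C, eval_X, qPoch]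
  ring

end Polynomial

namespace Jacobi

variable {R : Type*} [CommRing R] (q : R)

open Polynomial in
lemma neg_one_pow_mul_qPoch_mul_qPoch (hq : IsLeftRegular q) (n : ℕ) :
    (-1) ^ (n + 1) * (qPoch q 1 (n + 1) * qPoch q 1 n) =
      ∑ m ∈ range (2 * (n + 1) + 1),
        (-1) ^ m * m * (q ^ tripleExponent (n + 1) m * gaussBinom q (2 * (n + 1)) m) := by
  have hdeg : (tripleProd q (n + 1)).natDegree < 2 * (n + 1) + 1 :=
    Nat.lt_succ_of_le <| natDegree_le_iff_coeff_eq_zero.mpr fun m hm => by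
      rw [coeff_tripleProd q hq, gaussBinom_eq_zero_of_lt q hm, mul_zero]
  simp only [← coeff_tripleProd q hq]
  rw [← neg_eval_neg_one_derivative _ hdeg, eval_neg_one_derivative_tripleProd, pow_succ]
  ring

theorem pow_dvd_qPoch_pow_three_sub (hq : IsLeftRegular q) (N : ℕ) :
    q ^ (N + 1) ∣ qPoch q 1 (N + 1) ^ 3 -
      ∑ k ∈ range (N + 1), ((-1) ^ k * (2 * k + 1) : ℤ) • q ^ triangle k := by
  have hP := qPoch_succ q 1 N
  have hJ := neg_one_pow_mul_qPoch_mul_qPoch q hq N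
  set P := qPoch q 1 (N + 1)
  set c := fun m => q ^ tripleExponent (N + 1) m * gaussBinom q (2 * (N + 1)) m
  set S := ∑ m ∈ range (2 * (N + 1) + 1), (-1) ^ m * m * q ^ tripleExponent (N + 1) m
  set J := ∑ k ∈ range (N + 1), ((-1) ^ k * (2 * k + 1) : ℤ) • q ^ triangle k
  have hsign : ((-1 : R) ^ (N + 1)) ^ 2 = 1 := by rw [← pow_mul, pow_mul', neg_one_sq, one_pow]
  have hcube : P ^ 3 - P ^ 2 * qPoch q 1 N = q ^ (N + 1) * -(P ^ 2 * qPoch q 1 N) := by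
    rw [hP, add_comm 1 N]; ring
  have hmain : P ^ 2 * qPoch q 1 N - (-1) ^ (N + 1) * S =
      (-1) ^ (N + 1) * ∑ m ∈ range (2 * (N + 1) + 1),
        (-1) ^ m * m * (c m * P - q ^ tripleExponent (N + 1) m) := by
    have hsum : ∑ m ∈ range (2 * (N + 1) + 1),
        (-1) ^ m * m * (c m * P - q ^ tripleExponent (N + 1) m) =
        (∑ m ∈ range (2 * (N + 1) + 1), (-1) ^ m * m * c m) * P - S := by
      rw [sum_mul, ← sum_sub_distrib]
      exact sum_congr rfl fun m _ => by ring
    rw [hsum, ← hJ]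
    linear_combination -(P ^ 2 * qPoch q 1 N) * hsign
  have htail :
      (-1) ^ (N + 1) * S - J = q ^ triangle (N + 1) * ((-1) ^ (N + 1) * (2 * (N + 1 : ℕ))) := by
    rw [neg_one_pow_mul_sum_pow_tripleExponent]; ring
  have hsplit : P ^ 3 - J =
      (P ^ 3 - P ^ 2 * qPoch q 1 N) + (P ^ 2 * qPoch q 1 N - (-1) ^ (N + 1) * S) +
        ((-1) ^ (N + 1) * S - J) := by ring
  rw [hsplit, hcube, hmain, htail]
  refine dvd_add (dvd_add (dvd_mul_right _ _) (dvd_mul_of_dvd_right (dvd_sum fun m hm => ?_) _))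
    (dvd_mul_of_dvd_left (pow_dvd_pow q (le_triangle _)) _)
  exact dvd_mul_of_dvd_right (pow_dvd_pow_tripleExponent_mul_sub q _ _ (by simp at hm; omega)) _

end Jacobi

/-- Jacobi's identity `∏_{m≥1} (1-q^m)^3 = ∑_{n≥0} (-1)^n (2n+1) q^{n(n+1)/2}` in `ℤ[[q]]`,
stated coefficientwise with the product truncated at `m = N+1` (this does not affect the
`N`-th coefficient).  The `N`-th coefficient of the right-hand side is
`∑_{n ≤ N, n(n+1)/2 = N} (-1)^n (2n+1)` (any `n` with `n(n+1)/2 = N` satisfies `n ≤ N`). -/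
theorem jacobi_identity (N : ℕ) :
    (PowerSeries.coeff (R := ℤ) N)
        (∏ m ∈ Finset.range (N + 1), (1 - (PowerSeries.X : PowerSeries ℤ) ^ (m + 1)) ^ 3) =
    ∑ n ∈ Finset.range (N + 1),
      if n * (n + 1) / 2 = N then (-1 : ℤ) ^ n * (2 * n + 1) else 0 := by
  have hX : IsLeftRegular (X : ℤ⟦X⟧) := (IsRegular.of_ne_zero X_ne_zero).left
  have hcoeff := X_pow_dvd_iff.mp (Jacobi.pow_dvd_qPoch_pow_three_sub _ hX N) N N.lt_succ_self
  rw [map_sub, sub_eq_zero, map_sum] at hcoeff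
  rw [prod_pow, show ∏ m ∈ range (N + 1), (1 - (X : ℤ⟦X⟧) ^ (m + 1)) = Jacobi.qPoch X 1 (N + 1) by
    simp only [Jacobi.qPoch, add_comm 1], hcoeff]
  refine sum_congr rfl fun k _ => ?_
  rw [map_zsmul, coeff_X_pow, smul_ite, smul_eq_mul, mul_one, smul_zero]
  exact if_congr eq_comm rfl rfl
end

section
/- For every nonnegative integer n, the coefficient of q^{5n+1} in ∏_{m≥1}(1-q^{2m})^3 is divisible by 5. -/
/-!
Differentiating the `q`-binomial theorem
`∏_{m < 2v+1} (q^v + q^m x) = ∑_k [2v+1, k]_q q^(k choose 2) q^(v(2v+1-k)) x^k` at `x = -1`,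
where only the factor `m = v` vanishes, and pairing the terms `k = v - j` and `k = v + 1 + j`
gives the finite Jacobi identity
`(q;q)_v^2 = ∑_{j ≤ v} (-1)^j (2j+1) q^(j(j+1)/2) [2v+1, v-j]_q`.
Since `(q;q)_v [2v+1, v-j]_q ≡ 1 mod q^(v-j+1)`, it follows that
`(q;q)_v^3 ≡ ∑_{j ≤ v} (-1)^j (2j+1) q^(j(j+1)/2) mod q^(v+1)`. For `q = X^2` the coefficient of
`X^(5n+1)` is thus a sum of terms `±(2j+1)` with `j(j+1) = 5n+1`, and then
`(2j+1)^2 = 4(5n+1) + 1` is divisible by `5`.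
-/

open Finset

namespace Nat

lemma succ_choose_two (n : ℕ) : (n + 1).choose 2 = n.choose 2 + n := by
  rw [Nat.choose_succ_succ', Nat.choose_one_right, add_comm]

lemma add_choose_two (a b : ℕ) : (a + b).choose 2 = a.choose 2 + b.choose 2 + a * b := by
  induction b with
  | zero => simp
  | succ b ih => rw [← add_assoc, succ_choose_two, ih, succ_choose_two]; ring

lemma two_mul_choose_two_add_self (n : ℕ) : 2 * n.choose 2 + n = n * n := by
  induction n with
  | zero => simp
  | succ n ih => rw [succ_choose_two]; linarith

end Nat

section GaussBinomial

variable {R S : Type*} [CommRing R] [CommRing S]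

def qPochhammer (q : R) (n : ℕ) : R := ∏ i ∈ range n, (1 - q ^ (i + 1))

def gaussBinomial (q : R) : ℕ → ℕ → R
  | _, 0 => 1
  | 0, _ + 1 => 0
  | N + 1, k + 1 => q ^ (k + 1) * gaussBinomial q N (k + 1) + gaussBinomial q N k

@[simp]
lemma gaussBinomial_zero_right (q : R) (N : ℕ) : gaussBinomial q N 0 = 1 := by
  cases N <;> rfl

@[simp]
lemma gaussBinomial_zero_succ (q : R) (k : ℕ) : gaussBinomial q 0 (k + 1) = 0 := rfl

lemma gaussBinomial_succ_succ (q : R) (N k : ℕ) :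
    gaussBinomial q (N + 1) (k + 1) =
      q ^ (k + 1) * gaussBinomial q N (k + 1) + gaussBinomial q N k :=
  rfl

lemma gaussBinomial_eq_zero_of_lt (q : R) {N k : ℕ} (h : N < k) : gaussBinomial q N k = 0 := by
  obtain ⟨k, rfl⟩ := Nat.exists_eq_add_one_of_ne_zero (by omega : k ≠ 0)
  induction N generalizing k with
  | zero => rfl
  | succ N ih =>
    obtain ⟨k, rfl⟩ := Nat.exists_eq_add_one_of_ne_zero (by omega : k ≠ 0)
    rw [gaussBinomial_succ_succ, ih (k + 1) (by omega), ih k (by omega), mul_zero, add_zero]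

lemma map_gaussBinomial (f : R →+* S) (q : R) (N k : ℕ) :
    f (gaussBinomial q N k) = gaussBinomial (f q) N k := by
  induction N generalizing k with
  | zero => cases k <;> simp
  | succ N ih =>
    cases k with
    | zero => simp
    | succ k => simp [gaussBinomial_succ_succ, ih]

lemma map_qPochhammer (f : R →+* S) (q : R) (n : ℕ) :
    f (qPochhammer q n) = qPochhammer (f q) n := by
  simp [qPochhammer]

lemma qPochhammer_mul_gaussBinomial (q : R) (N k : ℕ) :
    qPochhammer q k * gaussBinomial q N k = ∏ i ∈ range k, (1 - q ^ (N - i)) := by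
  induction N generalizing k with
  | zero => cases k <;> simp [qPochhammer, prod_range_succ']
  | succ N ih =>
    cases k with
    | zero => simp [qPochhammer]
    | succ k =>
      have hk : qPochhammer q (k + 1) = qPochhammer q k * (1 - q ^ (k + 1)) := prod_range_succ _ _
      calc qPochhammer q (k + 1) * gaussBinomial q (N + 1) (k + 1)
          = q ^ (k + 1) * (qPochhammer q (k + 1) * gaussBinomial q N (k + 1)) +
              (1 - q ^ (k + 1)) * (qPochhammer q k * gaussBinomial q N k) := by
            rw [gaussBinomial_succ_succ, hk]; ring
        _ = _ := by
          rw [ih, ih, prod_range_succ, prod_range_succ' _ k]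
          simp only [Nat.add_sub_add_right, Nat.sub_zero]
          rcases le_or_gt k N with hkN | hNk
          · have hpow : q ^ (k + 1) * q ^ (N - k) = q ^ (N + 1) := by
              rw [← pow_add]; congr 1; omega
            linear_combination -(∏ i ∈ range k, (1 - q ^ (N - i))) * hpow
          · have hzero : ∏ i ∈ range k, (1 - q ^ (N - i)) = 0 :=
              prod_eq_zero (mem_range.mpr hNk) (by simp)
            simp [hzero]

lemma qPochhammer_mul_qPochhammer_mul_gaussBinomial (q : R) {N k : ℕ} (h : k ≤ N) :
    qPochhammer q k * qPochhammer q (N - k) * gaussBinomial q N k = qPochhammer q N := by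
  have hsplit : qPochhammer q N =
      qPochhammer q (N - k) * ∏ i ∈ range k, (1 - q ^ (N - k + i + 1)) := by
    rw [qPochhammer, qPochhammer, ← prod_range_add, Nat.sub_add_cancel h]
  have hreflect : ∏ i ∈ range k, (1 - q ^ (N - k + i + 1)) = ∏ i ∈ range k, (1 - q ^ (N - i)) := by
    rw [← prod_range_reflect]
    refine prod_congr rfl fun i hi => ?_
    rw [mem_range] at hi
    congr 2
    omega
  rw [mul_right_comm, qPochhammer_mul_gaussBinomial, hsplit, hreflect, mul_comm]

lemma gaussBinomial_symm (q : R) {N k : ℕ} (h : k ≤ N) :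
    gaussBinomial q N (N - k) = gaussBinomial q N k := by
  -- Cancel in `ℤ[X]`, where `(X;X)_n ≠ 0`, then specialize `X ↦ q`.
  have hne : ∀ n, qPochhammer (Polynomial.X : Polynomial ℤ) n ≠ 0 := fun n => by
    refine prod_ne_zero_iff.mpr fun i _ hi => ?_
    simpa using congrArg (Polynomial.eval 0) hi
  have huniv : gaussBinomial (Polynomial.X : Polynomial ℤ) N (N - k) =
      gaussBinomial Polynomial.X N k := by
    apply mul_left_cancel₀ (mul_ne_zero (hne k) (hne (N - k)))
    rw [qPochhammer_mul_qPochhammer_mul_gaussBinomial _ h, mul_comm (qPochhammer _ k),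
      ← qPochhammer_mul_qPochhammer_mul_gaussBinomial _ (N.sub_le k), Nat.sub_sub_self h]
  simpa [map_gaussBinomial] using
    congrArg (Polynomial.eval₂RingHom (Int.castRingHom R) q) huniv

theorem prod_add_pow_mul_eq_sum_gaussBinomial (q a x : R) (N : ℕ) :
    ∏ m ∈ range N, (a + q ^ m * x) =
      ∑ k ∈ range (N + 1), gaussBinomial q N k * q ^ k.choose 2 * a ^ (N - k) * x ^ k := by
  induction N generalizing x with
  | zero => simp
  | succ N ih =>
    have hshift : ∏ m ∈ range N, (a + q ^ (m + 1) * x) = ∏ m ∈ range N, (a + q ^ m * (q * x)) :=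
      prod_congr rfl fun m _ => by ring
    rw [prod_range_succ', hshift, ih, sum_range_succ' _ (N + 1)]
    simp only [gaussBinomial_succ_succ, add_mul, sum_add_distrib, mul_add]
    have hx : (∑ k ∈ range (N + 1),
          gaussBinomial q N k * q ^ k.choose 2 * a ^ (N - k) * (q * x) ^ k) * (q ^ 0 * x) =
        ∑ k ∈ range (N + 1),
          gaussBinomial q N k * q ^ (k + 1).choose 2 * a ^ (N + 1 - (k + 1)) * x ^ (k + 1) := by
      rw [sum_mul]
      refine sum_congr rfl fun k _ => ?_
      rw [Nat.succ_choose_two, Nat.add_sub_add_right]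
      ring
    have ha : (∑ k ∈ range (N + 1),
          gaussBinomial q N k * q ^ k.choose 2 * a ^ (N - k) * (q * x) ^ k) * a =
        ∑ k ∈ range (N + 1), q ^ (k + 1) * gaussBinomial q N (k + 1) * q ^ (k + 1).choose 2 *
          a ^ (N + 1 - (k + 1)) * x ^ (k + 1) +
        gaussBinomial q (N + 1) 0 * q ^ Nat.choose 0 2 * a ^ (N + 1 - 0) * x ^ 0 := by
      rw [sum_mul, sum_range_succ', sum_range_succ _ N,
        gaussBinomial_eq_zero_of_lt q N.lt_succ_self]
      simp only [gaussBinomial_zero_right, mul_zero, zero_mul, add_zero]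
      congr 1
      · refine sum_congr rfl fun k hk => ?_
        rw [mem_range] at hk
        rw [Nat.add_sub_add_right, show N - k = N - (k + 1) + 1 by omega]
        ring
      · simp [pow_succ]
    rw [hx, ha]
    ring

end GaussBinomial

section FiniteJacobi

variable {R : Type*} [CommRing R]

lemma prod_range_pow_eq_pow_choose_two (q : R) (n : ℕ) : ∏ m ∈ range n, q ^ m = q ^ n.choose 2 := by
  induction n with
  | zero => simp
  | succ n ih => rw [prod_range_succ, ih, Nat.succ_choose_two, pow_add]

lemma prod_range_pow_sub_pow (q : R) (v : ℕ) :
    ∏ m ∈ range v, (q ^ v - q ^ m) = (-1) ^ v * q ^ v.choose 2 * qPochhammer q v := by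
  have hfactor : ∀ m ∈ range v, q ^ v - q ^ m = -1 * q ^ m * (1 - q ^ (v - 1 - m + 1)) := by
    intro m hm
    rw [mem_range] at hm
    have hpow : q ^ m * q ^ (v - 1 - m + 1) = q ^ v := by rw [← pow_add]; congr 1; omega
    linear_combination -hpow
  rw [prod_congr rfl hfactor, prod_mul_distrib, prod_mul_distrib, prod_const, card_range,
    prod_range_pow_eq_pow_choose_two, qPochhammer, prod_range_reflect (fun i => 1 - q ^ (i + 1))]

lemma prod_range_pow_sub_pow_add (q : R) (v : ℕ) :
    ∏ i ∈ range v, (q ^ v - q ^ (v + 1 + i)) = q ^ (v * v) * qPochhammer q v := by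
  calc ∏ i ∈ range v, (q ^ v - q ^ (v + 1 + i)) = ∏ i ∈ range v, (q ^ v * (1 - q ^ (i + 1))) :=
        prod_congr rfl fun i _ => by ring
    _ = _ := by rw [prod_mul_distrib, prod_const, card_range, ← pow_mul, qPochhammer]

open Polynomial in
theorem sum_gaussBinomial_mul_neg_one_pow_pred (q : R) (v : ℕ) :
    ∑ k ∈ range (2 * v + 2), gaussBinomial q (2 * v + 1) k * q ^ k.choose 2 *
        q ^ (v * (2 * v + 1 - k)) * k * (-1) ^ (k - 1) =
      (-1) ^ v * q ^ (v + v.choose 2 + v * v) * qPochhammer q v ^ 2 := by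
  set f : ℕ → R[X] := fun m => C (q ^ v) + C q ^ m * X
  have hexpand := prod_add_pow_mul_eq_sum_gaussBinomial (C q) (C (q ^ v)) X (2 * v + 1)
  have hsplit : ∏ m ∈ range (2 * v + 1), f m =
      (∏ m ∈ range v, f m) * f v * ∏ i ∈ range v, f (v + 1 + i) := by
    rw [show 2 * v + 1 = (v + 1) + v by ring, prod_range_add, prod_range_succ]
  have hroot : eval (-1) (f v) = 0 := by simp [f]
  have hL := congrArg (fun p => eval (-1) (derivative p)) hsplit
  simp only [derivative_mul, eval_add, eval_mul, hroot] at hL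
  rw [hexpand] at hL
  simp only [f, eval_prod, ← map_gaussBinomial, ← map_pow, ← map_mul, derivative_sum,
    derivative_C_mul_X_pow, derivative_add, derivative_C, derivative_C_mul_X, eval_finsetSum,
    eval_C, eval_mul, eval_pow, eval_X, eval_add, mul_neg_one, ← sub_eq_add_neg, mul_zero, zero_mul,
    zero_add, add_zero, prod_range_pow_sub_pow, prod_range_pow_sub_pow_add, ← pow_mul] at hL
  rw [hL]
  ring

lemma natCast_mul_neg_one_pow_pred (k : ℕ) : (k : R) * (-1) ^ (k - 1) = -((k : R) * (-1) ^ k) := by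
  cases k with
  | zero => simp
  | succ k => rw [Nat.add_sub_cancel, pow_succ]; ring

lemma sum_gaussBinomial_mul_neg_one_pow_pred_eq_sum (q : R) (v : ℕ) :
    ∑ k ∈ range (2 * v + 2), gaussBinomial q (2 * v + 1) k * q ^ k.choose 2 *
        q ^ (v * (2 * v + 1 - k)) * k * (-1) ^ (k - 1) =
      (-1) ^ v * q ^ (v + v.choose 2 + v * v) * ∑ j ∈ range (v + 1),
        (-1) ^ j * (2 * j + 1) * q ^ (j + 1).choose 2 * gaussBinomial q (2 * v + 1) (v - j) := by
  rw [show 2 * v + 2 = (v + 1) + (v + 1) by ring, sum_range_add, ← sum_range_reflect _ (v + 1),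
    ← sum_add_distrib, mul_sum]
  refine sum_congr rfl fun j hj => ?_
  obtain ⟨d, rfl⟩ : ∃ d, v = j + d := ⟨v - j, by have := mem_range.mp hj; omega⟩
  have hsymm : gaussBinomial q (2 * (j + d) + 1) (j + d + 1 + j) =
      gaussBinomial q (2 * (j + d) + 1) d := by
    rw [← gaussBinomial_symm q (show d ≤ 2 * (j + d) + 1 by omega)]
    congr 1
    omega
  have hexp₁ : d.choose 2 + (j + d) * (2 * (j + d) + 1 - d) =
      j + d + (j + d).choose 2 + (j + d) * (j + d) + (j + 1).choose 2 := by
    rw [show 2 * (j + d) + 1 - d = 2 * j + d + 1 by omega, Nat.add_choose_two, Nat.succ_choose_two]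
    linarith [Nat.two_mul_choose_two_add_self j]
  have hexp₂ : (j + d + 1 + j).choose 2 + (j + d) * (2 * (j + d) + 1 - (j + d + 1 + j)) =
      j + d + (j + d).choose 2 + (j + d) * (j + d) + (j + 1).choose 2 := by
    rw [show j + d + 1 + j = (j + d) + (j + 1) by ring, Nat.add_choose_two,
      show 2 * (j + d) + 1 - (j + d + (j + 1)) = d by omega]
    ring
  have hsign : (-1 : R) ^ j * (-1) ^ j = 1 := by rw [← pow_add]; exact Even.neg_one_pow ⟨j, rfl⟩
  have hpred := natCast_mul_neg_one_pow_pred (R := R) d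
  simp only [show j + d + 1 - 1 - j = d by omega, show j + d - j = d by omega, hsymm]
  rw [mul_assoc _ (q ^ d.choose 2), ← pow_add, hexp₁, mul_assoc _ (q ^ (j + d + 1 + j).choose 2),
    ← pow_add, hexp₂, show j + d + 1 + j - 1 = d + j + j by omega, pow_add _ (_ + _ + _),
    pow_add _ j d, pow_add _ (d + j), pow_add _ d]
  push_cast
  set G := gaussBinomial q (2 * (j + d) + 1) d
  set E := q ^ (j + d + (j + d).choose 2 + (j + d) * (j + d))
  set C := q ^ (j + 1).choose 2
  linear_combination (G * E * C) * hpred + (G * E * C * d * (-1) ^ d) * hsign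

theorem qPochhammer_sq_eq_sum_gaussBinomial (q : R) (v : ℕ) :
    qPochhammer q v ^ 2 = ∑ j ∈ range (v + 1),
      (-1) ^ j * (2 * j + 1) * q ^ (j + 1).choose 2 * gaussBinomial q (2 * v + 1) (v - j) := by
  -- Cancel `(-1)^v X^E` in `ℤ[X]`, then specialize `X ↦ q`.
  have huniv : qPochhammer (Polynomial.X : Polynomial ℤ) v ^ 2 = ∑ j ∈ range (v + 1),
      (-1 : Polynomial ℤ) ^ j * (2 * (j : Polynomial ℤ) + 1) * Polynomial.X ^ (j + 1).choose 2 *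
        gaussBinomial Polynomial.X (2 * v + 1) (v - j) := by
    refine mul_left_cancel₀ (by simp [Polynomial.X_ne_zero] :
      (-1 : Polynomial ℤ) ^ v * Polynomial.X ^ (v + v.choose 2 + v * v) ≠ 0) ?_
    rw [← sum_gaussBinomial_mul_neg_one_pow_pred_eq_sum, sum_gaussBinomial_mul_neg_one_pow_pred]
  have hmap := congrArg (Polynomial.eval₂RingHom (Int.castRingHom R) q) huniv
  simp only [map_pow, map_sum, map_mul, map_add, map_neg, map_one, map_ofNat, map_natCast,
    map_qPochhammer, map_gaussBinomial, Polynomial.coe_eval₂RingHom, Polynomial.eval₂_X] at hmap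
  exact hmap

lemma pow_dvd_prod_one_sub_pow_sub_one (q : R) {n : ℕ} {s : Finset ℕ} {e : ℕ → ℕ}
    (h : ∀ i ∈ s, n ≤ e i) : q ^ n ∣ ∏ i ∈ s, (1 - q ^ e i) - 1 := by
  rw [← Ideal.mem_span_singleton, ← Ideal.Quotient.eq, map_prod, map_one]
  refine prod_eq_one fun i hi => ?_
  rw [map_sub, map_one, Ideal.Quotient.eq_zero_iff_mem.mpr
    (Ideal.mem_span_singleton.mpr (pow_dvd_pow q (h i hi))), sub_zero]

lemma pow_dvd_qPochhammer_mul_gaussBinomial_sub_one (q : R) {v N k : ℕ} (hkv : k ≤ v)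
    (hkN : 2 * k ≤ N) : q ^ (k + 1) ∣ qPochhammer q v * gaussBinomial q N k - 1 := by
  have hsplit : qPochhammer q v * gaussBinomial q N k =
      (∏ i ∈ range (v - k), (1 - q ^ (k + i + 1))) * ∏ i ∈ range k, (1 - q ^ (N - i)) := by
    rw [← qPochhammer_mul_gaussBinomial, ← mul_assoc, mul_comm _ (qPochhammer q k), qPochhammer,
      qPochhammer, ← prod_range_add, Nat.add_sub_cancel' hkv]
  have ha := pow_dvd_prod_one_sub_pow_sub_one q (s := range (v - k)) (e := fun i => k + i + 1)
    (n := k + 1) (fun i _ => by omega)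
  have hb := pow_dvd_prod_one_sub_pow_sub_one q (s := range k) (e := fun i => N - i)
    (n := k + 1) (fun i hi => by have := mem_range.mp hi; omega)
  rw [hsplit]
  convert dvd_add (dvd_mul_of_dvd_left ha (∏ i ∈ range k, (1 - q ^ (N - i)))) hb using 1
  ring

theorem pow_dvd_qPochhammer_pow_three_sub_sum (q : R) (v : ℕ) :
    q ^ (v + 1) ∣ qPochhammer q v ^ 3 -
      ∑ j ∈ range (v + 1), (-1) ^ j * (2 * j + 1) * q ^ (j + 1).choose 2 := by
  rw [pow_succ (qPochhammer q v) 2, qPochhammer_sq_eq_sum_gaussBinomial, sum_mul, ← sum_sub_distrib]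
  refine dvd_sum fun j hj => ?_
  have hj := mem_range.mp hj
  have hexp : v + 1 ≤ (j + 1).choose 2 + (v - j + 1) := by rw [Nat.succ_choose_two]; omega
  calc q ^ (v + 1) ∣ q ^ (j + 1).choose 2 * q ^ (v - j + 1) := by
        rw [← pow_add]; exact pow_dvd_pow q hexp
    _ ∣ q ^ (j + 1).choose 2 * (qPochhammer q v * gaussBinomial q (2 * v + 1) (v - j) - 1) :=
        mul_dvd_mul_left _
          (pow_dvd_qPochhammer_mul_gaussBinomial_sub_one q (Nat.sub_le v j) (by omega))
    _ ∣ _ := Dvd.intro ((-1) ^ j * (2 * j + 1)) (by ring)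

end FiniteJacobi

lemma five_dvd_two_mul_add_one_of_mul_succ_modEq {j : ℕ} (h : j * (j + 1) ≡ 1 [MOD 5]) :
    5 ∣ 2 * j + 1 := by
  rw [← ZMod.natCast_eq_natCast_iff] at h
  rw [← ZMod.natCast_eq_zero_iff]
  push_cast at h ⊢
  generalize (j : ZMod 5) = x at h ⊢
  revert x
  decide

open PowerSeries

/-- For every `n`, the coefficient of `q^{5n+1}` in `∏_{m≥1} (1-q^{2m})^3` is divisible by 5.
The product is truncated at `m = 5n+2`, which does not affect this coefficient. -/
theorem coeff_5np1_cube_even_eta (n : ℕ) :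
    (5 : ℤ) ∣
      (PowerSeries.coeff (5 * n + 1))
        (∏ m ∈ Finset.range (5 * n + 2),
          (1 - (PowerSeries.X : PowerSeries ℤ) ^ (2 * (m + 1))) ^ 3) := by
  have hprod : ∏ m ∈ range (5 * n + 2), (1 - (X : PowerSeries ℤ) ^ (2 * (m + 1))) ^ 3 =
      qPochhammer (X ^ 2) (5 * n + 2) ^ 3 := by
    simp only [qPochhammer, ← prod_pow, ← pow_mul]
  have hjacobi := pow_dvd_qPochhammer_pow_three_sub_sum (X ^ 2 : PowerSeries ℤ) (5 * n + 2)
  rw [← pow_mul] at hjacobi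
  have hcoeff := X_pow_dvd_iff.mp hjacobi (5 * n + 1) (by omega)
  rw [map_sub, sub_eq_zero] at hcoeff
  rw [hprod, hcoeff, map_sum]
  refine dvd_sum fun j _ => ?_
  rw [← pow_mul, show (-1 : PowerSeries ℤ) ^ j * (2 * (j : PowerSeries ℤ) + 1) =
    C ((-1 : ℤ) ^ j * (2 * j + 1)) by simp, coeff_C_mul_X_pow]
  split_ifs with hj
  · have hmod : j * (j + 1) ≡ 1 [MOD 5] := by
      rw [show j * (j + 1) = 2 * (j + 1).choose 2 by
        linarith [Nat.two_mul_choose_two_add_self (j + 1)], ← hj]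
      simp [Nat.ModEq, Nat.add_mod]
    exact dvd_mul_of_dvd_right
      (by exact_mod_cast five_dvd_two_mul_add_one_of_mul_succ_modEq hmod) _
  · exact dvd_zero 5
end

section
/- For every nonnegative integer n, the coefficient of q^{5n+3} and the coefficient of q^{5n+4} in the formal power series ∏_{m≥1}(1-q^m) are both zero. -/
/-!
Factors `1 - X ^ (m + 1)` with `m ≥ n` do not affect the coefficient of `X ^ n`, so by Euler's
pentagonal number theorem the coefficients in question are those of `pentagonalSeries`, which vanish
off the pentagonal numbers. Since `2 * pentagonal k = k * (3 * k - 1)` and `2` is invertible modulo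
`5`, a residue check shows `pentagonal k % 5 ∈ {0, 1, 2}`.
-/

open Finset PowerSeries

theorem pentagonal_mod_five_lt_three (k : ℤ) : pentagonal k % 5 < 3 := by
  have key : ∀ x y : ZMod 5, 2 * y = x * (3 * x - 1) → y.val < 3 := by decide
  have h := congrArg (Int.cast : ℤ → ZMod 5) (two_mul_natCast_pentagonal k)
  push_cast at h
  simpa only [ZMod.val_natCast] using key _ _ h

theorem PowerSeries.coeff_mul_one_sub_X_pow {R : Type*} [CommRing R] (φ : R⟦X⟧) {n k : ℕ}
    (h : n < k) : coeff n (φ * (1 - X ^ k)) = coeff n φ := by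
  rw [mul_sub, mul_one, map_sub, coeff_mul_X_pow', if_neg (by omega), sub_zero]

theorem PowerSeries.coeff_mul_prod_one_sub_X_pow {R : Type*} [CommRing R] (φ : R⟦X⟧) {n : ℕ}
    (u : Finset ℕ) (h : ∀ m ∈ u, n ≤ m) :
    coeff n (φ * ∏ m ∈ u, (1 - X ^ (m + 1))) = coeff n φ := by
  induction u using Finset.induction_on with
  | empty => simp
  | insert a u ha ih =>
    rw [prod_insert ha, ← mul_assoc, mul_right_comm,
      coeff_mul_one_sub_X_pow _ (Nat.lt_succ_of_le (h a (mem_insert_self a u))),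
      ih fun m hm ↦ h m (mem_insert_of_mem hm)]

theorem PowerSeries.coeff_prod_range_one_sub_X_pow {R : Type*} [CommRing R] {n M : ℕ}
    (h : n < M) :
    coeff n (∏ m ∈ range M, (1 - X ^ (m + 1) : R⟦X⟧)) = coeff n (pentagonalSeries R) := by
  obtain ⟨s, hs⟩ := Filter.eventually_atTop.1 (coeff_prod_one_sub_X_pow_eventually_eq R n)
  rw [← hs (range M ∪ s) subset_union_right, ← prod_sdiff (subset_union_left (s₂ := s)),
    mul_comm, coeff_mul_prod_one_sub_X_pow]
  intro m hm
  simp only [mem_sdiff, mem_union, mem_range] at hm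
  omega

/-- The product is truncated at `m = 5n+5`, which does not affect these coefficients. -/
theorem pentagonal_coeffs_vanish (n : ℕ) :
    (PowerSeries.coeff (R := ℤ) (5 * n + 3))
        (∏ m ∈ Finset.range (5 * n + 5), (1 - (PowerSeries.X : PowerSeries ℤ) ^ (m + 1))) = 0 ∧
    (PowerSeries.coeff (R := ℤ) (5 * n + 4))
        (∏ m ∈ Finset.range (5 * n + 5), (1 - (PowerSeries.X : PowerSeries ℤ) ^ (m + 1))) = 0 := by
  constructor <;>
  · rw [coeff_prod_range_one_sub_X_pow (by omega)]
    refine coeff_pentagonalSeries_eq_zero ℤ ?_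
    rintro ⟨k, hk⟩
    have := pentagonal_mod_five_lt_three k
    omega
end
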